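/- arXiv:0912.1577 — 3 statements merged into one kernel-verified Lean document; each statement's English description precedes it below -/
import Mathlib

section
/- Let G be a connected commutative real Lie group, let v be a nonzero element of the Lie algebra of G, and let X_v be the associated invariant vector field acting as a first-order differential operator on the Schwartz space S(G). Then for every f ∈ S(G), the translates T_{exp(tv)}(f) converge to f as t → 0 in S(G), and the difference quotients (T_{exp(tv)}(f) − f)/t converge to X_v(f) in S(G). -/
set_option maxHeartbeats 1000000

open Set

section aux

variable {E F : Type*} [NormedAddCommGroup E] [NormedSpace ℝ E]
  [NormedAddCommGroup F] [NormedSpace ℝ F]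

private lemma fderiv_shift (f : E → F) (a z : E) :
    fderiv ℝ (fun w => f (w + a)) z = fderiv ℝ f (z + a) := by
  by_cases h : DifferentiableAt ℝ f (z + a)
  · have h1 : HasFDerivAt (fun w : E => w + a) (ContinuousLinearMap.id ℝ E) z :=
      (hasFDerivAt_id z).add_const a
    have h2 := (h.hasFDerivAt.comp z h1).fderiv
    simpa [Function.comp_def] using h2
  · rw [fderiv_zero_of_not_differentiableAt h, fderiv_zero_of_not_differentiableAt]
    intro hc
    apply h
    have h1 : DifferentiableAt ℝ (fun u : E => u + (-a)) (z + a) :=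
      (differentiable_id.add_const (-a)) _
    have h3 : DifferentiableAt ℝ (fun w => f (w + a)) ((z + a) + (-a)) := by
      simpa using hc
    have h4 := h3.comp (z + a) h1
    have h5 : (fun u : E => f ((u + (-a)) + a)) = f := by
      funext u; simp
    simpa [Function.comp_def, h5] using h4

private lemma iteratedFDeriv_shift (f : E → F) (a : E) :
    ∀ (n : ℕ) (z : E),
      iteratedFDeriv ℝ n (fun w => f (w + a)) z = iteratedFDeriv ℝ n f (z + a) := by
  intro n
  induction n with
  | zero => intro z; ext m; simp
  | succ n ih =>
    intro z
    ext m
    rw [iteratedFDeriv_succ_apply_left, iteratedFDeriv_succ_apply_left]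
    have hfun : (iteratedFDeriv ℝ n fun w => f (w + a))
        = fun w => iteratedFDeriv ℝ n f (w + a) := funext ih
    rw [hfun, fderiv_shift (iteratedFDeriv ℝ n f) a z]

private lemma mvt_aux (φ φ' : ℝ → F) (t : ℝ)
    (hφ : ∀ s : ℝ, HasDerivAt φ (φ' s) s) {M : ℝ} (_hM0 : 0 ≤ M)
    (hM : ∀ s ∈ Icc (0:ℝ) 1, ‖φ' (s * t)‖ ≤ M) :
    ‖φ t - φ 0‖ ≤ M * |t| := by
  have h : ∀ s ∈ Icc (0:ℝ) 1,
      HasDerivWithinAt (fun s => φ (s * t)) (t • φ' (s * t)) (Icc (0:ℝ) 1) s := by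
    intro s _
    exact ((hφ (s * t)).scomp s (hasDerivAt_mul_const t)).hasDerivWithinAt
  have bound : ∀ s ∈ Ico (0:ℝ) 1, ‖t • φ' (s * t)‖ ≤ M * |t| := by
    intro s hs
    rw [norm_smul, Real.norm_eq_abs]
    rw [mul_comm]
    exact mul_le_mul_of_nonneg_right (hM s ⟨hs.1, hs.2.le⟩) (abs_nonneg t)
  have := norm_image_sub_le_of_norm_deriv_le_segment' h bound 1 (right_mem_Icc.2 zero_le_one)
  simpa using this

private lemma key_comm {f : E → F} (hf : ContDiff ℝ ((⊤:ℕ∞) : WithTop ℕ∞) f) (v : E) :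
    ∀ (n : ℕ) (x : E),
      iteratedFDeriv ℝ n (fun w => fderiv ℝ f w v) x
        = fderiv ℝ (iteratedFDeriv ℝ n f) x v := by
  intro n
  induction n with
  | zero =>
    intro x
    ext m
    rw [iteratedFDeriv_zero_apply, iteratedFDeriv_zero_eq_comp,
      LinearIsometryEquiv.comp_fderiv]
    simp
  | succ n ih =>
    intro x
    ext m
    have hF : ContDiff ℝ ((⊤:ℕ∞) : WithTop ℕ∞) (iteratedFDeriv ℝ n f) :=
      hf.iteratedFDeriv_right (by exact_mod_cast le_top)
    have hFd : DifferentiableAt ℝ (fderiv ℝ (iteratedFDeriv ℝ n f)) x :=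
      ((hF.fderiv_right (m := ((⊤:ℕ∞) : WithTop ℕ∞)) (by exact_mod_cast le_top)).differentiable
        (by simp)) x
    have hsymm : IsSymmSndFDerivAt ℝ (iteratedFDeriv ℝ n f) x := by
      apply hF.contDiffAt.isSymmSndFDerivAt
      simp only [minSmoothness_of_isRCLikeNormedField]
      exact WithTop.coe_le_coe.mpr le_top
    calc iteratedFDeriv ℝ (n+1) (fun w => fderiv ℝ f w v) x m
        = fderiv ℝ (iteratedFDeriv ℝ n (fun w => fderiv ℝ f w v)) x (m 0) (Fin.tail m) := by
          rw [iteratedFDeriv_succ_apply_left]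
      _ = fderiv ℝ (fun y => fderiv ℝ (iteratedFDeriv ℝ n f) y v) x (m 0) (Fin.tail m) := by
          rw [funext ih]
      _ = fderiv ℝ (fderiv ℝ (iteratedFDeriv ℝ n f)) x (m 0) v (Fin.tail m) := by
          rw [fderiv_clm_apply hFd (differentiableAt_const v)]
          simp
      _ = fderiv ℝ (fderiv ℝ (iteratedFDeriv ℝ n f)) x v (m 0) (Fin.tail m) := by
          rw [hsymm.eq]
      _ = fderiv ℝ (iteratedFDeriv ℝ (n+1) f) x v m := by
          have hcomp := LinearIsometryEquiv.comp_fderiv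
            (𝕜 := ℝ) (f := fderiv ℝ (iteratedFDeriv ℝ n f)) (x := x)
            ((continuousMultilinearCurryLeftEquiv ℝ (fun _ : Fin (n+1) => E) F).symm)
          have heq : iteratedFDeriv ℝ (n+1) f
              = ⇑(continuousMultilinearCurryLeftEquiv ℝ (fun _ : Fin (n+1) => E) F).symm ∘
                fderiv ℝ (iteratedFDeriv ℝ n f) := rfl
          rw [heq, hcomp]
          simp [Fin.tail]

private lemma norm_iteratedFDeriv_dirderiv_le {f : E → F}
    (hf : ContDiff ℝ ((⊤:ℕ∞) : WithTop ℕ∞) f) (v : E) (i : ℕ) (x : E) :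
    ‖iteratedFDeriv ℝ i (fun w => fderiv ℝ f w v) x‖
      ≤ ‖iteratedFDeriv ℝ (i+1) f x‖ * ‖v‖ := by
  have hc : ContDiff ℝ ((⊤:ℕ∞) : WithTop ℕ∞) (fderiv ℝ f) :=
    hf.fderiv_right (by exact_mod_cast le_top)
  refine ContinuousMultilinearMap.opNorm_le_bound (by positivity) fun m => ?_
  rw [iteratedFDeriv_clm_apply_const_apply hc (by exact_mod_cast le_top)]
  calc ‖(iteratedFDeriv ℝ i (fderiv ℝ f) x m) v‖
      ≤ ‖iteratedFDeriv ℝ i (fderiv ℝ f) x m‖ * ‖v‖ :=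
        ContinuousLinearMap.le_opNorm _ _
    _ ≤ (‖iteratedFDeriv ℝ i (fderiv ℝ f) x‖ * ∏ j, ‖m j‖) * ‖v‖ :=
        mul_le_mul_of_nonneg_right (ContinuousMultilinearMap.le_opNorm _ _) (norm_nonneg v)
    _ = ‖iteratedFDeriv ℝ (i+1) f x‖ * ‖v‖ * ∏ j, ‖m j‖ := by
        rw [norm_iteratedFDeriv_fderiv]; ring

private lemma my_sub_apply {i : ℕ} {f g : E → F} (hf : ContDiff ℝ i f)
    (hg : ContDiff ℝ i g) (x : E) :
    iteratedFDeriv ℝ i (fun w => f w - g w) x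
      = iteratedFDeriv ℝ i f x - iteratedFDeriv ℝ i g x := by
  have h1 : (fun w => f w - g w) = fun w => f w + (fun w => -(g w)) w := by
    funext w; simp [sub_eq_add_neg]
  have h2 : iteratedFDeriv ℝ i (fun w => -(g w)) x = -iteratedFDeriv ℝ i g x :=
    iteratedFDeriv_neg_apply
  rw [h1, iteratedFDeriv_add_apply' hf.contDiffAt hg.neg.contDiffAt, h2, sub_eq_add_neg]

end aux

/-!
STATEMENT 6: Let `G = 𝕋^p × ℝ^q` be a connected commutative real Lie group, `v` an
element of its Lie algebra `ℝ^p × ℝ^q`, and `X_v` the associated invariant vector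
field (the directional derivative `w ↦ fderiv ℝ f w v`).  Identifying Schwartz
functions on `G` with their `ℤ^p`-periodic lifts `f : ℝ^p × ℝ^q → ℂ` (smooth, with
all seminorms `sup_z ‖z.2‖^k ‖∂ⁿf(z)‖` finite), for every `f ∈ S(G)`:
the translates `T_{exp(tv)} f` converge to `f` in `S(G)` as `t → 0`, and the
difference quotients `(T_{exp(tv)} f − f)/t` converge to `X_v f` in `S(G)`,
convergence being with respect to every Schwartz seminorm.
-/

theorem translation_flow_differentiable_in_schwartz_space (p q : ℕ)
    (f : ((Fin p → ℝ) × (Fin q → ℝ)) → ℂ)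
    -- `f` is the lift of a function on `𝕋^p × ℝ^q`
    (hper : ∀ (z : (Fin p → ℝ) × (Fin q → ℝ)) (m : Fin p → ℤ),
      f (z.1 + fun i => (m i : ℝ), z.2) = f z)
    -- `f` is a Schwartz function on `𝕋^p × ℝ^q`
    (hsmooth : ContDiff ℝ (⊤ : ℕ∞) f)
    (hdecay : ∀ k n : ℕ, ∃ C : ℝ,
      ∀ z, ‖z.2‖ ^ k * ‖iteratedFDeriv ℝ n f z‖ ≤ C)
    (v : (Fin p → ℝ) × (Fin q → ℝ)) :
    -- `T_{exp(tv)} f → f` in `S(G)`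
    (∀ (k n : ℕ) (ε : ℝ), 0 < ε → ∃ δ > 0, ∀ t : ℝ, |t| < δ →
      ∀ z, ‖z.2‖ ^ k *
        ‖iteratedFDeriv ℝ n (fun w => f (w + t • v) - f w) z‖ ≤ ε) ∧
    -- `(T_{exp(tv)} f − f)/t → X_v f` in `S(G)`
    (∀ (k n : ℕ) (ε : ℝ), 0 < ε → ∃ δ > 0, ∀ t : ℝ, t ≠ 0 → |t| < δ →
      ∀ z, ‖z.2‖ ^ k *
        ‖iteratedFDeriv ℝ n
          (fun w => f (w + t • v) - f w - t • (fderiv ℝ f w v)) z‖ ≤ ε * |t|) := by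
  have hsm : ContDiff ℝ ((⊤:ℕ∞) : WithTop ℕ∞) f := hsmooth.of_le (by simp)
  -- weighted uniform bounds along translated points
  have hW : ∀ k n : ℕ, ∃ M : ℝ, 0 ≤ M ∧
      ∀ (z : (Fin p → ℝ) × (Fin q → ℝ)) (s : ℝ), |s| ≤ 1 →
        ‖z.2‖ ^ k * ‖iteratedFDeriv ℝ n f (z + s • v)‖ ≤ M := by
    intro k n
    obtain ⟨C1, hC1⟩ := hdecay k n
    obtain ⟨C0, hC0⟩ := hdecay 0 n
    refine ⟨2^k * (max C1 0 + ‖v.2‖^k * max C0 0), by positivity, ?_⟩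
    intro z s hs
    set w := z + s • v with hwdef
    have hw2 : w.2 = z.2 + s • v.2 := rfl
    have h2 : ‖z.2‖ ≤ ‖w.2‖ + ‖v.2‖ := by
      have hz2 : z.2 = w.2 - s • v.2 := by rw [hw2]; abel
      calc ‖z.2‖ = ‖w.2 - s • v.2‖ := by rw [← hz2]
        _ ≤ ‖w.2‖ + ‖s • v.2‖ := norm_sub_le _ _
        _ ≤ ‖w.2‖ + ‖v.2‖ := by
            have : ‖s • v.2‖ = |s| * ‖v.2‖ := by rw [norm_smul, Real.norm_eq_abs]
            rw [this]
            have := mul_le_mul_of_nonneg_right hs (norm_nonneg v.2)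
            linarith
    have hzk : ‖z.2‖^k ≤ 2^k * (‖w.2‖^k + ‖v.2‖^k) := by
      calc ‖z.2‖^k ≤ (‖w.2‖ + ‖v.2‖)^k := pow_le_pow_left₀ (norm_nonneg _) h2 k
        _ ≤ (2 * max ‖w.2‖ ‖v.2‖)^k := by
            apply pow_le_pow_left₀ (by positivity)
            have := add_le_add (le_max_left ‖w.2‖ ‖v.2‖) (le_max_right ‖w.2‖ ‖v.2‖)
            linarith
        _ = 2^k * (max ‖w.2‖ ‖v.2‖)^k := mul_pow 2 _ k
        _ ≤ 2^k * (‖w.2‖^k + ‖v.2‖^k) := by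
            apply mul_le_mul_of_nonneg_left _ (by positivity)
            rcases max_cases ‖w.2‖ ‖v.2‖ with ⟨he, _⟩ | ⟨he, _⟩ <;> rw [he]
            · exact le_add_of_nonneg_right (by positivity)
            · exact le_add_of_nonneg_left (by positivity)
    have h1 : ‖w.2‖^k * ‖iteratedFDeriv ℝ n f w‖ ≤ max C1 0 :=
      le_trans (hC1 w) (le_max_left _ _)
    have hD : ‖iteratedFDeriv ℝ n f w‖ ≤ max C0 0 := by
      have := hC0 w
      simp only [pow_zero, one_mul] at this
      exact le_trans this (le_max_left _ _)
    calc ‖z.2‖^k * ‖iteratedFDeriv ℝ n f w‖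
        ≤ (2^k * (‖w.2‖^k + ‖v.2‖^k)) * ‖iteratedFDeriv ℝ n f w‖ :=
          mul_le_mul_of_nonneg_right hzk (norm_nonneg _)
      _ = 2^k * (‖w.2‖^k * ‖iteratedFDeriv ℝ n f w‖
            + ‖v.2‖^k * ‖iteratedFDeriv ℝ n f w‖) := by ring
      _ ≤ 2^k * (max C1 0 + ‖v.2‖^k * max C0 0) := by
          have h3 : ‖v.2‖^k * ‖iteratedFDeriv ℝ n f w‖ ≤ ‖v.2‖^k * max C0 0 :=
            mul_le_mul_of_nonneg_left hD (by positivity)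
          have := add_le_add h1 h3
          exact mul_le_mul_of_nonneg_left this (by positivity)
  have hshift : ∀ t : ℝ,
      ContDiff ℝ ((⊤:ℕ∞) : WithTop ℕ∞) (fun w => f (w + t • v)) := fun t =>
    hsm.comp (contDiff_id.add contDiff_const)
  have hFsm : ∀ n : ℕ, ContDiff ℝ ((⊤:ℕ∞) : WithTop ℕ∞) (iteratedFDeriv ℝ n f) := fun n =>
    hsm.iteratedFDeriv_right (by exact_mod_cast le_top)
  have hline : ∀ (z : (Fin p → ℝ) × (Fin q → ℝ)) (s : ℝ),
      HasDerivAt (fun s : ℝ => z + s • v) v s := by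
    intro z s
    have h0 : HasDerivAt (fun s : ℝ => s • v) ((1:ℝ) • v) s := (hasDerivAt_id s).smul_const v
    simpa using h0.const_add z
  constructor
  · -- Part 1
    intro k n ε hε
    obtain ⟨M, hM0, hMb⟩ := hW k (n+1)
    have hpos : 0 < M * ‖v‖ + 1 := by nlinarith [mul_nonneg hM0 (norm_nonneg v)]
    refine ⟨min 1 (ε / (M * ‖v‖ + 1)), lt_min one_pos (div_pos hε hpos), ?_⟩
    intro t ht z
    have ht1 : |t| ≤ 1 := (lt_of_lt_of_le ht (min_le_left _ _)).le
    have htε : |t| ≤ ε / (M * ‖v‖ + 1) := (lt_of_lt_of_le ht (min_le_right _ _)).le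
    have hrw : iteratedFDeriv ℝ n (fun w => f (w + t • v) - f w) z
        = iteratedFDeriv ℝ n f (z + t • v) - iteratedFDeriv ℝ n f z := by
      rw [my_sub_apply ((hshift t).of_le (by exact_mod_cast le_top))
        (hsm.of_le (by exact_mod_cast le_top)), iteratedFDeriv_shift f (t • v) n z]
    rw [hrw]
    obtain ⟨c, hc0, hceq⟩ : ∃ c : ℝ, 0 ≤ c ∧ c = ‖z.2‖ ^ k := ⟨_, by positivity, rfl⟩
    have hns : ∀ (X : ContinuousMultilinearMap ℝ
        (fun _ : Fin n => ((Fin p → ℝ) × (Fin q → ℝ))) ℂ), ‖c • X‖ = c * ‖X‖ := by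
      intro X
      have h := norm_smul c X
      rw [Real.norm_eq_abs, abs_of_nonneg hc0] at h
      exact h
    have h0 : z + (0:ℝ) • v = z := by simp
    have hd : ∀ s : ℝ, HasDerivAt (fun s' : ℝ => c • iteratedFDeriv ℝ n f (z + s' • v))
        (c • (fderiv ℝ (iteratedFDeriv ℝ n f) (z + s • v) v)) s := by
      intro s
      have hD : HasFDerivAt (iteratedFDeriv ℝ n f)
          (fderiv ℝ (iteratedFDeriv ℝ n f) (z + s • v)) (z + s • v) :=
        (((hFsm n).differentiable (by simp)) _).hasFDerivAt
      exact (hD.comp_hasDerivAt s (hline z s)).const_smul c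
    have hbnd : ∀ s ∈ Icc (0:ℝ) 1,
        ‖c • (fderiv ℝ (iteratedFDeriv ℝ n f) (z + (s * t) • v) v)‖ ≤ M * ‖v‖ := by
      intro s hs
      have hst : |s * t| ≤ 1 := by
        rw [abs_mul]
        calc |s| * |t| ≤ 1 * 1 :=
            mul_le_mul (by rw [abs_of_nonneg hs.1]; exact hs.2) ht1 (abs_nonneg _) zero_le_one
          _ = 1 := mul_one 1
      calc ‖c • (fderiv ℝ (iteratedFDeriv ℝ n f) (z + (s * t) • v) v)‖
          = c * ‖fderiv ℝ (iteratedFDeriv ℝ n f) (z + (s * t) • v) v‖ := hns _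
        _ ≤ c * (‖fderiv ℝ (iteratedFDeriv ℝ n f) (z + (s * t) • v)‖ * ‖v‖) :=
            mul_le_mul_of_nonneg_left (ContinuousLinearMap.le_opNorm _ _) hc0
        _ = (c * ‖iteratedFDeriv ℝ (n+1) f (z + (s * t) • v)‖) * ‖v‖ := by
            rw [norm_fderiv_iteratedFDeriv]; ring
        _ ≤ M * ‖v‖ := by
            refine mul_le_mul_of_nonneg_right ?_ (norm_nonneg v)
            rw [hceq]
            exact hMb z (s*t) hst
    have hmvt := mvt_aux (fun s' : ℝ => c • iteratedFDeriv ℝ n f (z + s' • v))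
      (fun s : ℝ => c • (fderiv ℝ (iteratedFDeriv ℝ n f) (z + s • v) v)) t hd
      (mul_nonneg hM0 (norm_nonneg v)) hbnd
    have hfin : M * ‖v‖ * |t| ≤ ε := by
      have h1 : M * ‖v‖ * |t| ≤ (M * ‖v‖ + 1) * |t| := by nlinarith [abs_nonneg t]
      have h2 : (M * ‖v‖ + 1) * |t| ≤ (M * ‖v‖ + 1) * (ε / (M * ‖v‖ + 1)) :=
        mul_le_mul_of_nonneg_left htε hpos.le
      have h3 : (M * ‖v‖ + 1) * (ε / (M * ‖v‖ + 1)) = ε := by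
        rw [mul_comm, div_mul_cancel₀ ε hpos.ne']
      linarith
    calc ‖z.2‖ ^ k * ‖iteratedFDeriv ℝ n f (z + t • v) - iteratedFDeriv ℝ n f z‖
        = ‖c • iteratedFDeriv ℝ n f (z + t • v) - c • iteratedFDeriv ℝ n f (z + (0:ℝ) • v)‖ := by
          rw [h0, ← smul_sub, hns, hceq]
      _ ≤ M * ‖v‖ * |t| := hmvt
      _ ≤ ε := hfin
  · -- Part 2
    intro k n ε hε
    have hg : ContDiff ℝ ((⊤:ℕ∞) : WithTop ℕ∞) (fun w => fderiv ℝ f w v) :=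
      (hsm.fderiv_right (by exact_mod_cast le_top)).clm_apply contDiff_const
    have hGsm : ContDiff ℝ ((⊤:ℕ∞) : WithTop ℕ∞)
        (iteratedFDeriv ℝ n (fun w => fderiv ℝ f w v)) :=
      hg.iteratedFDeriv_right (by exact_mod_cast le_top)
    obtain ⟨M, hM0, hMb⟩ := hW k (n+2)
    have hMv : 0 ≤ M * ‖v‖ * ‖v‖ :=
      mul_nonneg (mul_nonneg hM0 (norm_nonneg v)) (norm_nonneg v)
    have hpos : 0 < M * ‖v‖ * ‖v‖ + 1 := by linarith
    refine ⟨min 1 (ε / (M * ‖v‖ * ‖v‖ + 1)), lt_min one_pos (div_pos hε hpos), ?_⟩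
    intro t _ht0 ht z
    have ht1 : |t| ≤ 1 := (lt_of_lt_of_le ht (min_le_left _ _)).le
    have htε : |t| ≤ ε / (M * ‖v‖ * ‖v‖ + 1) := (lt_of_lt_of_le ht (min_le_right _ _)).le
    have hrw : iteratedFDeriv ℝ n (fun w => f (w + t • v) - f w - t • (fderiv ℝ f w v)) z
        = iteratedFDeriv ℝ n f (z + t • v) - iteratedFDeriv ℝ n f z
          - t • iteratedFDeriv ℝ n (fun w => fderiv ℝ f w v) z := by
      have ha : ContDiff ℝ (n : ℕ∞) (fun w => f (w + t • v) - f w) :=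
        ((hshift t).of_le (by exact_mod_cast le_top)).sub
          (hsm.of_le (by exact_mod_cast le_top))
      have hb : ContDiff ℝ (n : ℕ∞) (fun w => t • fderiv ℝ f w v) :=
        (hg.of_le (by exact_mod_cast le_top)).const_smul t
      rw [my_sub_apply ha hb z,
        my_sub_apply ((hshift t).of_le (by exact_mod_cast le_top))
          (hsm.of_le (by exact_mod_cast le_top)),
        iteratedFDeriv_const_smul_apply' (hg.of_le (by exact_mod_cast le_top)).contDiffAt,
        iteratedFDeriv_shift f (t • v) n z]
    rw [hrw]
    obtain ⟨c, hc0, hceq⟩ : ∃ c : ℝ, 0 ≤ c ∧ c = ‖z.2‖ ^ k := ⟨_, by positivity, rfl⟩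
    have hns : ∀ (X : ContinuousMultilinearMap ℝ
        (fun _ : Fin n => ((Fin p → ℝ) × (Fin q → ℝ))) ℂ), ‖c • X‖ = c * ‖X‖ := by
      intro X
      have h := norm_smul c X
      rw [Real.norm_eq_abs, abs_of_nonneg hc0] at h
      exact h
    have h0 : z + (0:ℝ) • v = z := by simp
    -- the constant `B`
    have hd : ∀ s : ℝ, HasDerivAt
        (fun s' : ℝ => c • (iteratedFDeriv ℝ n f (z + s' • v)
          - s' • iteratedFDeriv ℝ n (fun w => fderiv ℝ f w v) z))
        (c • (iteratedFDeriv ℝ n (fun w => fderiv ℝ f w v) (z + s • v)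
          - iteratedFDeriv ℝ n (fun w => fderiv ℝ f w v) z)) s := by
      intro s
      have hD : HasFDerivAt (iteratedFDeriv ℝ n f)
          (fderiv ℝ (iteratedFDeriv ℝ n f) (z + s • v)) (z + s • v) :=
        (((hFsm n).differentiable (by simp)) _).hasFDerivAt
      have h1 := hD.comp_hasDerivAt s (hline z s)
      have h2 : HasDerivAt
          (fun s' : ℝ => s' • iteratedFDeriv ℝ n (fun w => fderiv ℝ f w v) z)
          (iteratedFDeriv ℝ n (fun w => fderiv ℝ f w v) z) s := by
        have := (hasDerivAt_id s).smul_const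
          (iteratedFDeriv ℝ n (fun w => fderiv ℝ f w v) z)
        simpa using this
      have h3 := (h1.sub h2).const_smul c
      have h4 : iteratedFDeriv ℝ n (fun w => fderiv ℝ f w v) (z + s • v)
          = fderiv ℝ (iteratedFDeriv ℝ n f) (z + s • v) v := key_comm hsm v n (z + s • v)
      rw [h4]
      exact h3
    have hdG : ∀ r : ℝ, HasDerivAt
        (fun r' : ℝ => c • iteratedFDeriv ℝ n (fun w => fderiv ℝ f w v) (z + r' • v))
        (c • (fderiv ℝ (iteratedFDeriv ℝ n (fun w => fderiv ℝ f w v)) (z + r • v) v)) r := by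
      intro r
      have hD : HasFDerivAt (iteratedFDeriv ℝ n (fun w => fderiv ℝ f w v))
          (fderiv ℝ (iteratedFDeriv ℝ n (fun w => fderiv ℝ f w v)) (z + r • v)) (z + r • v) :=
        ((hGsm.differentiable (by simp)) _).hasFDerivAt
      exact (hD.comp_hasDerivAt r (hline z r)).const_smul c
    have hGbnd : ∀ u : ℝ, |u| ≤ 1 →
        ‖c • (fderiv ℝ (iteratedFDeriv ℝ n (fun w => fderiv ℝ f w v)) (z + u • v) v)‖
          ≤ M * ‖v‖ * ‖v‖ := by
      intro u hu
      calc ‖c • (fderiv ℝ (iteratedFDeriv ℝ n (fun w => fderiv ℝ f w v)) (z + u • v) v)‖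
          = c * ‖fderiv ℝ (iteratedFDeriv ℝ n (fun w => fderiv ℝ f w v)) (z + u • v) v‖ :=
            hns _
        _ ≤ c * (‖fderiv ℝ (iteratedFDeriv ℝ n (fun w => fderiv ℝ f w v)) (z + u • v)‖ * ‖v‖) :=
            mul_le_mul_of_nonneg_left (ContinuousLinearMap.le_opNorm _ _) hc0
        _ = (c * ‖iteratedFDeriv ℝ (n+1) (fun w => fderiv ℝ f w v) (z + u • v)‖) * ‖v‖ := by
            rw [norm_fderiv_iteratedFDeriv]; ring
        _ ≤ (c * (‖iteratedFDeriv ℝ (n+2) f (z + u • v)‖ * ‖v‖)) * ‖v‖ := by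
            refine mul_le_mul_of_nonneg_right ?_ (norm_nonneg v)
            exact mul_le_mul_of_nonneg_left
              (norm_iteratedFDeriv_dirderiv_le hsm v (n+1) (z + u • v)) hc0
        _ = (c * ‖iteratedFDeriv ℝ (n+2) f (z + u • v)‖) * ‖v‖ * ‖v‖ := by ring
        _ ≤ M * ‖v‖ * ‖v‖ := by
            refine mul_le_mul_of_nonneg_right
              (mul_le_mul_of_nonneg_right ?_ (norm_nonneg v)) (norm_nonneg v)
            rw [hceq]
            exact hMb z u hu
    have hbnd : ∀ s ∈ Icc (0:ℝ) 1,
        ‖c • (iteratedFDeriv ℝ n (fun w => fderiv ℝ f w v) (z + (s * t) • v)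
          - iteratedFDeriv ℝ n (fun w => fderiv ℝ f w v) z)‖ ≤ M * ‖v‖ * ‖v‖ * |t| := by
      intro s hs
      have hst : |s * t| ≤ |t| := by
        rw [abs_mul]
        calc |s| * |t| ≤ 1 * |t| :=
            mul_le_mul_of_nonneg_right (by rw [abs_of_nonneg hs.1]; exact hs.2) (abs_nonneg t)
          _ = |t| := one_mul _
      have hst1 : |s * t| ≤ 1 := le_trans hst ht1
      have hinner : ∀ r ∈ Icc (0:ℝ) 1,
          ‖c • (fderiv ℝ (iteratedFDeriv ℝ n (fun w => fderiv ℝ f w v))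
            (z + (r * (s * t)) • v) v)‖ ≤ M * ‖v‖ * ‖v‖ := by
        intro r hr
        apply hGbnd
        rw [abs_mul]
        calc |r| * |s * t| ≤ 1 * 1 :=
            mul_le_mul (by rw [abs_of_nonneg hr.1]; exact hr.2) hst1 (abs_nonneg _) zero_le_one
          _ = 1 := mul_one 1
      have hmvt2 := mvt_aux
        (fun r' : ℝ => c • iteratedFDeriv ℝ n (fun w => fderiv ℝ f w v) (z + r' • v))
        (fun r : ℝ => c • (fderiv ℝ (iteratedFDeriv ℝ n (fun w => fderiv ℝ f w v))
          (z + r • v) v)) (s * t) hdG hMv hinner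
      calc ‖c • (iteratedFDeriv ℝ n (fun w => fderiv ℝ f w v) (z + (s * t) • v)
            - iteratedFDeriv ℝ n (fun w => fderiv ℝ f w v) z)‖
          = ‖c • iteratedFDeriv ℝ n (fun w => fderiv ℝ f w v) (z + (s * t) • v)
            - c • iteratedFDeriv ℝ n (fun w => fderiv ℝ f w v) (z + (0:ℝ) • v)‖ := by
            rw [h0, ← smul_sub]
        _ ≤ M * ‖v‖ * ‖v‖ * |s * t| := hmvt2
        _ ≤ M * ‖v‖ * ‖v‖ * |t| := mul_le_mul_of_nonneg_left hst hMv
    have hmvt := mvt_aux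
      (fun s' : ℝ => c • (iteratedFDeriv ℝ n f (z + s' • v)
        - s' • iteratedFDeriv ℝ n (fun w => fderiv ℝ f w v) z))
      (fun s : ℝ => c • (iteratedFDeriv ℝ n (fun w => fderiv ℝ f w v) (z + s • v)
        - iteratedFDeriv ℝ n (fun w => fderiv ℝ f w v) z)) t hd
      (mul_nonneg hMv (abs_nonneg t)) hbnd
    have hfin : M * ‖v‖ * ‖v‖ * |t| ≤ ε := by
      have h1 : M * ‖v‖ * ‖v‖ * |t| ≤ (M * ‖v‖ * ‖v‖ + 1) * |t| := by nlinarith [abs_nonneg t]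
      have h2 : (M * ‖v‖ * ‖v‖ + 1) * |t| ≤ (M * ‖v‖ * ‖v‖ + 1) * (ε / (M * ‖v‖ * ‖v‖ + 1)) :=
        mul_le_mul_of_nonneg_left htε hpos.le
      have h3 : (M * ‖v‖ * ‖v‖ + 1) * (ε / (M * ‖v‖ * ‖v‖ + 1)) = ε := by
        rw [mul_comm, div_mul_cancel₀ ε hpos.ne']
      linarith
    have hval : (c • (iteratedFDeriv ℝ n f (z + t • v)
          - t • iteratedFDeriv ℝ n (fun w => fderiv ℝ f w v) z))
        - (c • (iteratedFDeriv ℝ n f (z + (0:ℝ) • v)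
          - (0:ℝ) • iteratedFDeriv ℝ n (fun w => fderiv ℝ f w v) z))
        = c • (iteratedFDeriv ℝ n f (z + t • v) - iteratedFDeriv ℝ n f z
          - t • iteratedFDeriv ℝ n (fun w => fderiv ℝ f w v) z) := by
      rw [h0, zero_smul, sub_zero, ← smul_sub]
      congr 1
      abel
    calc ‖z.2‖ ^ k * ‖iteratedFDeriv ℝ n f (z + t • v) - iteratedFDeriv ℝ n f z
          - t • iteratedFDeriv ℝ n (fun w => fderiv ℝ f w v) z‖
        = ‖c • (iteratedFDeriv ℝ n f (z + t • v) - iteratedFDeriv ℝ n f z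
          - t • iteratedFDeriv ℝ n (fun w => fderiv ℝ f w v) z)‖ := by
          rw [hns, hceq]
      _ ≤ M * ‖v‖ * ‖v‖ * |t| * |t| := by rw [← hval]; exact hmvt
      _ ≤ ε * |t| := mul_le_mul_of_nonneg_right hfin (abs_nonneg t)
end

section
/- Let D be an irreducible projective curve over a field k with function field k(D), and let p ∈ D be a smooth k-rational point. Let 𝔸_D be the adele ring of D, Ô_q the completed local ring at q, K_p = Frac(Ô_p) ≅ k((t)), and A_p the ring of regular functions on the affine curve D ∖ {p}. Then there is an exact sequence of abelian groups: 0 → ∏_{q ≠ p} Ô_q → 𝔸_D / k(D) → K_p / A_p → 0. -/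
namespace DedekindDomain

open IsDedekindDomain

variable (R K : Type*) [CommRing R] [IsDedekindDomain R] [Field K] [Algebra R K]
  [IsFractionRing R K]

/-- The finite integral adeles `∏_v R_v` (removed from Mathlib; restored with its old meaning). -/
def FiniteIntegralAdeles : Type _ :=
  ∀ v : HeightOneSpectrum R, v.adicCompletionIntegers K

noncomputable instance : CommRing (FiniteIntegralAdeles R K) :=
  inferInstanceAs (CommRing (∀ v : HeightOneSpectrum R, v.adicCompletionIntegers K))

/-- The inclusion of the finite integral adeles into the finite adele ring. -/
noncomputable def FiniteIntegralAdeles.toFiniteAdeleRing : FiniteIntegralAdeles R K →+* FiniteAdeleRing R K where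
  toFun x := ⟨fun v => (x v : v.adicCompletion K), Filter.Eventually.of_forall (fun v => (x v).2)⟩
  map_one' := rfl
  map_mul' _ _ := rfl
  map_zero' := rfl
  map_add' _ _ := rfl

noncomputable instance : Algebra (FiniteIntegralAdeles R K) (FiniteAdeleRing R K) :=
  (FiniteIntegralAdeles.toFiniteAdeleRing R K).toAlgebra

end DedekindDomain

open IsDedekindDomain DedekindDomain

/-!
The place `p` is not a prime of `R`, so the sequence reduces to two facts about the Dedekind
domain `R`: an element of `F` integral at every prime of `R` lies in `R` (this is the kernel), and
strong approximation `𝔸_R^fin = F + ∏_v R_v` (this is surjectivity). For strong approximation,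
approximate each of the finitely many non-integral components `a_v` by `x ∈ F` (density of `F`
in `K_v`) and replace `x` by a partial fraction, integral away from `v`, via the Chinese
remainder theorem; then sum over `v`. Injectivity holds because `ι` is injective.
-/

namespace IsDedekindDomain.HeightOneSpectrum

variable {R F : Type*} [CommRing R] [IsDedekindDomain R] [Field F] [Algebra R F]
  [IsFractionRing R F]

theorem algebraMap_mem_adicCompletionIntegers_iff (v : HeightOneSpectrum R) (x : F) :
    algebraMap F (v.adicCompletion F) x ∈ v.adicCompletionIntegers F ↔ v.valuation F x ≤ 1 := by
  rw [mem_adicCompletionIntegers, ← valuedAdicCompletion_eq_valuation' v x]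
  rfl

theorem valuation_div_le_one_of_mem_pow_multiplicity (v : HeightOneSpectrum R) {y s : R}
    (hs : s ≠ 0) (hy : y ∈ v.asIdeal ^ multiplicity v.asIdeal (Ideal.span {s})) :
    v.valuation F (algebraMap R F y / algebraMap R F s) ≤ 1 := by
  rw [map_div₀, valuation_of_algebraMap, valuation_of_algebraMap,
    v.intValuation_eq_exp_neg_multiplicity hs]
  exact div_le_one_of_le₀ ((v.intValuation_le_pow_iff_mem y _).mpr hy) zero_le

theorem exists_valuation_sub_le_one_and_forall_ne (v : HeightOneSpectrum R) (x : F) :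
    ∃ g : F, v.valuation F (x - g) ≤ 1 ∧ ∀ w ≠ v, w.valuation F g ≤ 1 := by
  classical
  obtain ⟨⟨a, s, hs⟩, hx⟩ := IsLocalization.surj (nonZeroDivisors R) x
  have hs0 : s ≠ 0 := nonZeroDivisors.ne_zero hs
  have hx : x = algebraMap R F a / algebraMap R F s :=
    eq_div_of_mul_eq (IsFractionRing.to_map_ne_zero_of_mem_nonZeroDivisors hs) hx
  have hfin := Ideal.finite_factors (I := Ideal.span {s}) (by simpa using hs0)
  -- Chinese remainder theorem: `y ≡ a` at `v` and `y ≡ 0` at the other primes dividing `s`.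
  obtain ⟨y, hy⟩ := exists_forall_sub_mem_ideal (s := insert v hfin.toFinset)
    (fun w => w.asIdeal) (fun w => multiplicity w.asIdeal (Ideal.span {s}))
    (fun w _ => w.prime) (fun w _ w' _ hne h => hne (HeightOneSpectrum.ext h))
    (fun w => if (w : HeightOneSpectrum R) = v then a else 0)
  refine ⟨algebraMap R F y / algebraMap R F s, ?_, fun w hw => ?_⟩
  · rw [hx, ← sub_div, ← map_sub]
    apply valuation_div_le_one_of_mem_pow_multiplicity v hs0
    simpa using neg_mem (hy v (Finset.mem_insert_self v _))
  · apply valuation_div_le_one_of_mem_pow_multiplicity w hs0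
    by_cases hws : w.asIdeal ∣ Ideal.span {s}
    · simpa [hw] using hy w (Finset.mem_insert_of_mem (hfin.mem_toFinset.mpr hws))
    · simp [multiplicity_eq_zero.mpr hws]

theorem exists_sub_mem_adicCompletionIntegers_and_forall_ne (v : HeightOneSpectrum R)
    (y : v.adicCompletion F) :
    ∃ g : F, y - algebraMap F _ g ∈ v.adicCompletionIntegers F ∧
      ∀ w ≠ v, w.valuation F g ≤ 1 := by
  have hopen : IsOpen ((y - ·) ⁻¹' (v.adicCompletionIntegers F : Set (v.adicCompletion F))) :=
    (Valued.isOpen_valuationSubring _).preimage (continuous_const.sub continuous_id)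
  obtain ⟨x, hx⟩ := (denseRange_algebraMap F v).exists_mem_open hopen ⟨y, by simp⟩
  obtain ⟨g, hxg, hg⟩ := v.exists_valuation_sub_le_one_and_forall_ne x
  refine ⟨g, ?_, hg⟩
  have hsplit : y - algebraMap F _ g = (y - algebraMap F _ x) + algebraMap F _ (x - g) := by
    rw [map_sub]; ring
  rw [hsplit]
  exact add_mem hx ((v.algebraMap_mem_adicCompletionIntegers_iff _).mpr hxg)

end IsDedekindDomain.HeightOneSpectrum

namespace DedekindDomain.FiniteIntegralAdeles

variable {R F : Type*} [CommRing R] [IsDedekindDomain R] [Field F] [Algebra R F]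
  [IsFractionRing R F]

theorem algebraMap_injective :
    Function.Injective (algebraMap (FiniteIntegralAdeles R F) (FiniteAdeleRing R F)) :=
  fun _ _ h => funext fun v => Subtype.ext (congrArg (· v) h)

theorem mem_range_algebraMap_iff {a : FiniteAdeleRing R F} :
    a ∈ (algebraMap (FiniteIntegralAdeles R F) (FiniteAdeleRing R F)).range ↔
      ∀ v, a v ∈ v.adicCompletionIntegers F :=
  ⟨by rintro ⟨c, rfl⟩ v; exact (c v).2, fun h => ⟨fun v => ⟨a v, h v⟩, rfl⟩⟩

theorem algebraMap_mem_range_algebraMap_iff {f : F} :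
    algebraMap F (FiniteAdeleRing R F) f ∈
        (algebraMap (FiniteIntegralAdeles R F) (FiniteAdeleRing R F)).range ↔
      f ∈ (algebraMap R F).range := by
  simp_rw [mem_range_algebraMap_iff, FiniteAdeleRing.algebraMap_apply]
  exact ⟨HeightOneSpectrum.mem_integers_of_valuation_le_one F f ∘
      fun h v => (v.algebraMap_mem_adicCompletionIntegers_iff f).mp (h v),
    by rintro ⟨r, rfl⟩ v; exact v.coe_mem_adicCompletionIntegers r⟩

/-- Strong approximation for the finite adeles: `𝔸_R^fin = F + ∏_v R_v`. -/
theorem exists_sub_algebraMap_mem_range_algebraMap (a : FiniteAdeleRing R F) :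
    ∃ f : F, a - algebraMap F _ f ∈
      (algebraMap (FiniteIntegralAdeles R F) (FiniteAdeleRing R F)).range := by
  classical
  have hS : {v : HeightOneSpectrum R | a v ∉ v.adicCompletionIntegers F}.Finite := a.2
  set S := hS.toFinset
  have hg : ∀ v, ∃ g : F, a v - algebraMap F _ g ∈ v.adicCompletionIntegers F ∧
      (∀ w ≠ v, w.valuation F g ≤ 1) ∧ (v ∉ S → g = 0) := by
    intro v
    by_cases hv : v ∈ S
    · obtain ⟨g, hvg, hwg⟩ := v.exists_sub_mem_adicCompletionIntegers_and_forall_ne (a v)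
      exact ⟨g, hvg, hwg, absurd hv⟩
    · exact ⟨0, by simpa [S] using hv, by simp, fun _ => rfl⟩
  choose g hgv hgw hg0 using hg
  refine ⟨∑ v ∈ S, g v, mem_range_algebraMap_iff.mpr fun w => ?_⟩
  have hsum : ∑ v ∈ S, g v = g w + ∑ v ∈ (insert w S).erase w, g v := by
    rw [Finset.add_sum_erase _ _ (Finset.mem_insert_self w S),
      Finset.sum_insert_of_eq_zero_if_notMem (hg0 w)]
  show a w - algebraMap F (w.adicCompletion F) (∑ v ∈ S, g v) ∈ _
  rw [hsum, map_add, ← sub_sub, map_sum]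
  exact sub_mem (hgv w) (sum_mem fun v hv =>
    (w.algebraMap_mem_adicCompletionIntegers_iff _).mpr (hgw v w (Finset.ne_of_mem_erase hv).symm))

end DedekindDomain.FiniteIntegralAdeles

/-!
STATEMENT 15: Let `D` be an irreducible projective curve over a field `k` with a smooth
`k`-rational point `p`.  We model the affine curve `D ∖ {p}` by a Dedekind domain `R`
(= `A_p`, the ring of regular functions on `D ∖ p`) with fraction field `F = k(D)`, and
the completed local field at `p` by `K_p ≅ k((t)) = LaurentSeries k`, into which `F`
embeds densely via `ι`.  The full adele group of `D` is `𝔸_D = 𝔸_{D∖p}^fin × K_p`.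
Then there is an exact sequence of abelian groups
  `0 → ∏_{q ≠ p} Ô_q → 𝔸_D / k(D) → K_p / A_p → 0` :
(1) the integral adeles `∏_{q ≠ p} Ô_q` inject into `𝔸_D/k(D)`;
(2) the map from `K_p` (via `x ↦ (0,x)`) to the quotient of `𝔸_D` by the subgroup
    generated by the principal adeles and the integral adeles is surjective;
(3) its kernel is exactly the image of `A_p = R`.
-/

noncomputable section

variable (k R F : Type*) [Field k] [CommRing R] [IsDedekindDomain R] [Field F]
  [Algebra R F] [IsFractionRing R F]

/-- The full adele group of the curve: finite adeles away from `p` times `K_p = k((t))`. -/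
abbrev CurveAdeles := FiniteAdeleRing R F × LaurentSeries k

variable (ι : F →+* LaurentSeries k)

/-- The diagonally embedded rational functions `k(D) = F` in `𝔸_D`. -/
def principalCurveSubgroup : AddSubgroup (CurveAdeles k R F) :=
  (((algebraMap F (FiniteAdeleRing R F)).toAddMonoidHom.prod ι.toAddMonoidHom)).range

/-- The map `∏_{q ≠ p} Ô_q → 𝔸_D`, `x ↦ (x, 0)`. -/
def integralToAdeles : FiniteIntegralAdeles R F →+ CurveAdeles k R F :=
  (AddMonoidHom.inl (FiniteAdeleRing R F) (LaurentSeries k)).comp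
    (algebraMap (FiniteIntegralAdeles R F) (FiniteAdeleRing R F)).toAddMonoidHom

/-- The map `∏_{q ≠ p} Ô_q → 𝔸_D/k(D)`. -/
def integralToQuotient : FiniteIntegralAdeles R F →+
    (CurveAdeles k R F ⧸ principalCurveSubgroup k R F ι) :=
  (QuotientAddGroup.mk' _).comp (integralToAdeles k R F)

/-- The map `K_p → 𝔸_D/(k(D) + ∏_{q ≠ p} Ô_q)` induced by `x ↦ (0, x)`. -/
def KpToQuotient : LaurentSeries k →+
    (CurveAdeles k R F ⧸ (principalCurveSubgroup k R F ι ⊔ (integralToAdeles k R F).range)) :=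
  (QuotientAddGroup.mk' _).comp (AddMonoidHom.inr (FiniteAdeleRing R F) (LaurentSeries k))

section

variable {k R F ι}

theorem mem_principalCurveSubgroup_sup_range_iff {z : CurveAdeles k R F} :
    z ∈ principalCurveSubgroup k R F ι ⊔ (integralToAdeles k R F).range ↔
      ∃ f : F, ι f = z.2 ∧ z.1 - algebraMap F _ f ∈
        (algebraMap (FiniteIntegralAdeles R F) (FiniteAdeleRing R F)).range := by
  rw [AddSubgroup.mem_sup]
  constructor
  · rintro ⟨_, ⟨f, rfl⟩, _, ⟨c, rfl⟩, rfl⟩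
    exact ⟨f, by simp [integralToAdeles], c, by simp [integralToAdeles]⟩
  · rintro ⟨f, hf, c, hc⟩
    exact ⟨_, ⟨f, rfl⟩, _, ⟨c, rfl⟩,
      Prod.ext (by simp [integralToAdeles, hc]) (by simp [integralToAdeles, hf])⟩

theorem integralToQuotient_injective : Function.Injective (integralToQuotient k R F ι) := by
  rw [injective_iff_map_eq_zero]
  intro c hc
  obtain ⟨f, hf⟩ := (QuotientAddGroup.eq_zero_iff _).mp hc
  obtain rfl : f = 0 := ι.injective (by simpa [integralToAdeles] using congrArg Prod.snd hf)
  exact FiniteIntegralAdeles.algebraMap_injective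
    (by simpa [integralToAdeles] using (congrArg Prod.fst hf).symm)

theorem KpToQuotient_surjective : Function.Surjective (KpToQuotient k R F ι) := by
  intro q
  obtain ⟨⟨a, y⟩, rfl⟩ := QuotientAddGroup.mk'_surjective _ q
  obtain ⟨f, hf⟩ := FiniteIntegralAdeles.exists_sub_algebraMap_mem_range_algebraMap a
  exact ⟨y - ι f, QuotientAddGroup.eq.mpr
    (mem_principalCurveSubgroup_sup_range_iff.mpr ⟨f, by simp, by simpa using hf⟩)⟩

theorem KpToQuotient_ker :
    (KpToQuotient k R F ι).ker = (ι.comp (algebraMap R F)).toAddMonoidHom.range := by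
  ext x
  simp only [AddMonoidHom.mem_ker, KpToQuotient, AddMonoidHom.comp_apply,
    QuotientAddGroup.mk'_apply, QuotientAddGroup.eq_zero_iff,
    mem_principalCurveSubgroup_sup_range_iff, AddMonoidHom.inr_apply, zero_sub, ← map_neg,
    FiniteIntegralAdeles.algebraMap_mem_range_algebraMap_iff]
  constructor
  · rintro ⟨f, rfl, r, hr⟩
    exact ⟨-r, by simp [hr]⟩
  · rintro ⟨r, rfl⟩
    exact ⟨algebraMap R F r, rfl, -r, by simp⟩

end

theorem curve_adelic_exact_sequence :
    Function.Injective (integralToQuotient k R F ι) ∧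
    Function.Surjective (KpToQuotient k R F ι) ∧
    (KpToQuotient k R F ι).ker = (ι.comp (algebraMap R F)).toAddMonoidHom.range :=
  ⟨integralToQuotient_injective, KpToQuotient_surjective, KpToQuotient_ker⟩

end
end

section
/- Let X = ℙ¹ × ℙ¹ over a field k with coordinates t, u, let C₁, C₂ be the coordinate lines meeting transversally at the point p given by t = u = 0. With K_{p,C₁} = k((t))((u)), K_{p,C₂} = k((u))((t)), B_{C₁} = k[t⁻¹]((u)), B_{C₂} = k[u⁻¹]((t)), and B_p = ⋃_{m,n} u^{-m} t^{-n} k[[u,t]] embedded diagonally, the quotient (K_{p,C₁} ⊕ K_{p,C₂}) / (B_{C₁} ⊕ B_{C₂} + B_p) is isomorphic to k[[u,t]]·ut, equivalently k((u))((t)) / (k[u⁻¹]((t)) + k((u))[t⁻¹]) ≅ u t k[[u,t]]. -/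
/-!
Every `f ∈ k((u))((t))` splits as the sum of its terms `uᵐ tⁿ` with `m, n > 0` and the rest;
the rest lies in `k[u⁻¹]((t)) + k((u))[t⁻¹]`, because its part with `n > 0` has no positive
powers of `u` and its part with `n ≤ 0` has no positive powers of `t`. Conversely every element
of either subgroup has no terms with `m, n > 0`. So keeping only the terms with `m, n > 0` is
an additive map onto `u t k[[u,t]]` whose kernel is exactly `k[u⁻¹]((t)) + k((u))[t⁻¹]`.
-/

variable (k : Type*) [Field k]

/-- `k[u⁻¹]((t)) ⊆ k((u))((t))`. -/
def polesInU : AddSubgroup (LaurentSeries (LaurentSeries k)) where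
  carrier := {f | ∀ n m : ℤ, 0 < m → (f.coeff n).coeff m = 0}
  zero_mem' := by intro n m _; simp
  add_mem' := by
    intro f g hf hg n m hm
    simp [HahnSeries.coeff_add, hf n m hm, hg n m hm]
  neg_mem' := by
    intro f hf n m hm
    simp [HahnSeries.coeff_neg, hf n m hm]

/-- `k((u))[t⁻¹] ⊆ k((u))((t))`. -/
def polesInT : AddSubgroup (LaurentSeries (LaurentSeries k)) where
  carrier := {f | ∀ n : ℤ, 0 < n → f.coeff n = 0}
  zero_mem' := by intro n _; simp
  add_mem' := by
    intro f g hf hg n hn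
    simp [HahnSeries.coeff_add, hf n hn, hg n hn]
  neg_mem' := by
    intro f hf n hn
    simp [HahnSeries.coeff_neg, hf n hn]

/-- `u·t·k[[u,t]] ⊆ k((u))((t))`: series supported in `t`-degrees `≥ 1` whose
coefficients are supported in `u`-degrees `≥ 1`. -/
def utPowerSeries : AddSubgroup (LaurentSeries (LaurentSeries k)) where
  carrier := {f | ∀ n m : ℤ, (n ≤ 0 ∨ m ≤ 0) → (f.coeff n).coeff m = 0}
  zero_mem' := by intro n m _; simp
  add_mem' := by
    intro f g hf hg n m h
    simp [HahnSeries.coeff_add, hf n m h, hg n m h]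
  neg_mem' := by
    intro f hf n m h
    simp [HahnSeries.coeff_neg, hf n m h]

namespace HahnSeries

variable {Γ R : Type*} [PartialOrder Γ]

def mapAddMonoidHom {S : Type*} [AddMonoid R] [AddMonoid S] (f : R →+ S) :
    R⟦Γ⟧ →+ S⟦Γ⟧ where
  toFun x := x.map f
  map_zero' := HahnSeries.map_zero (f : ZeroHom R S)
  map_add' _ _ := HahnSeries.map_add f

@[simp]
theorem coeff_mapAddMonoidHom {S : Type*} [AddMonoid R] [AddMonoid S] (f : R →+ S)
    (x : R⟦Γ⟧) (i : Γ) : (mapAddMonoidHom f x).coeff i = f (x.coeff i) :=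
  rfl

def truncGT [DecidableLT Γ] [AddMonoid R] (c : Γ) : R⟦Γ⟧ →+ R⟦Γ⟧ where
  toFun x :=
    { coeff i := if c < i then x.coeff i else 0
      isPWO_support' := x.isPWO_support.mono (by simp) }
  map_zero' := by ext; simp
  map_add' x y := by ext i; by_cases h : c < i <;> simp [h]

@[simp]
theorem coeff_truncGT [DecidableLT Γ] [AddMonoid R] (c : Γ) (x : R⟦Γ⟧) (i : Γ) :
    (truncGT c x).coeff i = if c < i then x.coeff i else 0 :=
  rfl

theorem coeff_sub_truncGT_of_lt [DecidableLT Γ] [AddGroup R] {c i : Γ} (h : c < i)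
    (x : R⟦Γ⟧) : (x - truncGT c x).coeff i = 0 := by
  simp [h]

end HahnSeries

open HahnSeries

section DoubleTrunc

variable {R : Type*} [AddMonoid R]

/-- Keeps the terms `uᵐ tⁿ` of `f ∈ R((u))((t))` with `m > 0` and `n > 0`. -/
def doubleTrunc : LaurentSeries (LaurentSeries R) →+ LaurentSeries (LaurentSeries R) :=
  (truncGT 0).comp (mapAddMonoidHom (truncGT 0))

@[simp]
theorem coeff_coeff_doubleTrunc (f : LaurentSeries (LaurentSeries R)) (n m : ℤ) :
    ((doubleTrunc f).coeff n).coeff m = if 0 < n ∧ 0 < m then (f.coeff n).coeff m else 0 := by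
  by_cases hn : 0 < n <;> by_cases hm : 0 < m <;> simp [doubleTrunc, hn, hm]

theorem doubleTrunc_eq_zero_iff {f : LaurentSeries (LaurentSeries R)} :
    doubleTrunc f = 0 ↔ ∀ n m : ℤ, 0 < n → 0 < m → (f.coeff n).coeff m = 0 := by
  refine ⟨fun h n m hn hm => ?_, fun h => ?_⟩
  · simpa [hn, hm] using congr_arg (fun g => (g.coeff n).coeff m) h
  · ext n m
    rw [coeff_coeff_doubleTrunc]
    split_ifs with hnm
    exacts [h n m hnm.1 hnm.2, rfl]

theorem doubleTrunc_doubleTrunc (f : LaurentSeries (LaurentSeries R)) :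
    doubleTrunc (doubleTrunc f) = doubleTrunc f := by
  ext n m
  simp only [coeff_coeff_doubleTrunc]
  split_ifs <;> rfl

end DoubleTrunc

theorem doubleTrunc_eq_self_iff {f : LaurentSeries (LaurentSeries k)} :
    doubleTrunc f = f ↔ f ∈ utPowerSeries k := by
  refine ⟨fun h n m hnm => ?_, fun hf => ?_⟩
  · rw [← h, coeff_coeff_doubleTrunc, if_neg]
    omega
  · ext n m
    rw [coeff_coeff_doubleTrunc]
    split_ifs with hnm
    · rfl
    · exact (hf n m (by omega)).symm

theorem range_doubleTrunc :
    Set.range (doubleTrunc (R := k)) =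
      (utPowerSeries k : Set (LaurentSeries (LaurentSeries k))) := by
  ext f
  refine ⟨?_, fun hf => ⟨f, (doubleTrunc_eq_self_iff k).2 hf⟩⟩
  rintro ⟨g, rfl⟩
  exact (doubleTrunc_eq_self_iff k).1 (doubleTrunc_doubleTrunc g)

theorem ker_doubleTrunc : (doubleTrunc (R := k)).ker = polesInU k ⊔ polesInT k := by
  refine le_antisymm (fun f hf => ?_) (sup_le (fun f hf => ?_) (fun f hf => ?_))
  · have hpos := doubleTrunc_eq_zero_iff.1 hf
    rw [← add_sub_cancel (truncGT 0 f) f]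
    refine AddSubgroup.add_mem_sup (fun n m hm => ?_)
      (fun n hn => coeff_sub_truncGT_of_lt hn f)
    rw [coeff_truncGT]
    split_ifs with hn
    exacts [hpos n m hn hm, rfl]
  · exact doubleTrunc_eq_zero_iff.2 fun n m _ hm => hf n m hm
  · exact doubleTrunc_eq_zero_iff.2 fun n m hn _ => by rw [hf n hn, HahnSeries.coeff_zero]

/-- The quotient `k((u))((t)) / ( k[u⁻¹]((t)) + k((u))[t⁻¹] )` is isomorphic to
`u·t·k[[u,t]]`: there is an additive endomorphism of `k((u))((t))` with image
`u·t·k[[u,t]]` and kernel exactly `k[u⁻¹]((t)) + k((u))[t⁻¹]` (so the first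
isomorphism theorem yields the isomorphism of the statement). -/
theorem laurent_quotient_iso_utPowerSeries :
    ∃ φ : LaurentSeries (LaurentSeries k) →+ LaurentSeries (LaurentSeries k),
      Set.range ⇑φ = (utPowerSeries k : Set (LaurentSeries (LaurentSeries k))) ∧
      ⇑φ ⁻¹' {0} = ((polesInU k ⊔ polesInT k : AddSubgroup (LaurentSeries (LaurentSeries k))) :
        Set (LaurentSeries (LaurentSeries k))) :=
  ⟨doubleTrunc, range_doubleTrunc k, by rw [← ker_doubleTrunc, AddMonoidHom.coe_ker]⟩
end
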